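/- arXiv:2603.24362 — 3 statements merged into one kernel-verified Lean document; each statement's English description precedes it below -/
import Mathlib

section
/- Let 0 < λ ≤ Λ, set ω = Λ/λ and α = π/2, let γ > 0, and define u_X(x,y,z) = −γ√ω·sin((x−α)/√ω) + γ·cos y + cos z. Suppose 0 ≤ y ≤ α, 0 ≤ z ≤ α, (γ·cos y + cos z)/(γ√ω) ≤ 1, and α ≤ x ≤ α + √ω·arcsin((γ·cos y + cos z)/(γ√ω)). Then: (i) −M⁺_{λ,Λ}(Hess u_X(x,y,z)) = λ·u_X(x,y,z); (ii) u_X(x,y,z) > 0 whenever x < α + √ω·arcsin((γ·cos y + cos z)/(γ√ω)); and (iii) u_X(x,y,z) = 0 when x = α + √ω·arcsin((γ·cos y + cos z)/(γ√ω)). -/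
open Matrix Polynomial in
lemma my_charpoly_conj {n : Type*} [Fintype n] [DecidableEq n]
    (U : Matrix.unitaryGroup n ℝ) (D : Matrix n n ℝ) :
    ((U : Matrix n n ℝ) * D * star (U : Matrix n n ℝ)).charpoly = D.charpoly := by
  set f : Matrix n n ℝ →+* Matrix n n ℝ[X] := (Polynomial.C : ℝ →+* ℝ[X]).mapMatrix with hf
  have hU : (U : Matrix n n ℝ) * star (U : Matrix n n ℝ) = 1 :=
    Matrix.mem_unitaryGroup_iff.mp U.2
  have key : charmatrix ((U : Matrix n n ℝ) * D * star (U : Matrix n n ℝ)) =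
      f (U : Matrix n n ℝ) * charmatrix D * f (star (U : Matrix n n ℝ)) := by
    rw [charmatrix, charmatrix, Matrix.mul_sub, Matrix.sub_mul, _root_.map_mul, _root_.map_mul]
    congr 1
    symm
    calc f (U : Matrix n n ℝ) * Matrix.scalar n (X : ℝ[X]) * f (star (U : Matrix n n ℝ))
        = Matrix.scalar n (X : ℝ[X]) * (f (U : Matrix n n ℝ) * f (star (U : Matrix n n ℝ))) := by
          rw [← (Matrix.scalar_commute (X : ℝ[X]) (fun r' => mul_comm _ _)
            (f (U : Matrix n n ℝ))).eq, mul_assoc]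
      _ = Matrix.scalar n (X : ℝ[X]) := by rw [← _root_.map_mul, hU, _root_.map_one, mul_one]
  have hdet : (f (U : Matrix n n ℝ)).det * (f (star (U : Matrix n n ℝ))).det = 1 := by
    rw [← Matrix.det_mul, ← _root_.map_mul, hU, _root_.map_one, Matrix.det_one]
  rw [Matrix.charpoly, Matrix.charpoly, key, Matrix.det_mul, Matrix.det_mul]
  linear_combination (charmatrix D).det * hdet

open Matrix Polynomial in
lemma eigs_diagonal_multiset {n : Type*} [Fintype n] [DecidableEq n] [LinearOrder n]
    (d : n → ℝ) (h : (Matrix.diagonal d).IsHermitian) :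
    Multiset.map h.eigenvalues Finset.univ.val = Multiset.map d Finset.univ.val := by
  have h1 : (Matrix.diagonal d).charpoly = ∏ i, (X - C (d i)) := by
    simpa using Matrix.charpoly_of_upperTriangular _ (Matrix.blockTriangular_diagonal d)
  have h2 : (Matrix.diagonal d).charpoly = ∏ i, (X - C (h.eigenvalues i)) := by
    conv_lhs => rw [h.spectral_theorem]
    rw [Unitary.conjStarAlgAut_apply, my_charpoly_conj, RCLike.ofReal_real_eq_id, Function.id_comp]
    simpa using Matrix.charpoly_of_upperTriangular _
      (Matrix.blockTriangular_diagonal h.eigenvalues)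
  have e1 : (∏ i, (X - C (d i))) =
      ((Finset.univ.val.map d).map (fun a => X - C a)).prod := by
    rw [Multiset.map_map]; rfl
  have e2 : (∏ i, (X - C (h.eigenvalues i))) =
      ((Finset.univ.val.map h.eigenvalues).map (fun a => X - C a)).prod := by
    rw [Multiset.map_map]; rfl
  have h3 := (h2.symm.trans h1)
  rw [e1, e2] at h3
  have h4 := congrArg Polynomial.roots h3
  rwa [Polynomial.roots_multiset_prod_X_sub_C, Polynomial.roots_multiset_prod_X_sub_C] at h4

/-- The Pucci maximal operator `M⁺_{λ,Λ}` of a symmetric matrix: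
`Σᵢ (Λ·max(eᵢ,0) + λ·min(eᵢ,0))` over the eigenvalues `eᵢ` (with multiplicity). -/
noncomputable def pucci (lam Lam : ℝ) {n : Type*} [Fintype n] [DecidableEq n]
    (A : Matrix n n ℝ) : ℝ :=
  if h : A.IsHermitian then
    ∑ i, (Lam * max (h.eigenvalues i) 0 + lam * min (h.eigenvalues i) 0)
  else 0

open Matrix Polynomial in
lemma my_pucci_diagonal {n : Type*} [Fintype n] [DecidableEq n] [LinearOrder n]
    (lam Lam : ℝ) (d : n → ℝ) :
    pucci lam Lam (Matrix.diagonal d) = ∑ i, (Lam * max (d i) 0 + lam * min (d i) 0) := by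
  have h : (Matrix.diagonal d).IsHermitian := Matrix.isHermitian_diagonal d
  rw [pucci, dif_pos h]
  have conv1 : ∀ g : n → ℝ, (∑ i, (Lam * max (g i) 0 + lam * min (g i) 0)) =
      ((Finset.univ.val.map g).map (fun e => Lam * max e 0 + lam * min e 0)).sum := by
    intro g; rw [Multiset.map_map]; rfl
  rw [conv1 h.eigenvalues, conv1 d, eigs_diagonal_multiset d h]

lemma my_pucci_diag3 (lam Lam a b c : ℝ) (ha : 0 ≤ a) (hb : b ≤ 0) (hc : c ≤ 0) :
    pucci lam Lam (Matrix.diagonal ![a,b,c]) = Lam * a + (lam * b + lam * c) := by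
  rw [my_pucci_diagonal lam Lam _, Fin.sum_univ_three]
  simp only [Matrix.cons_val_zero, Matrix.cons_val_one, Matrix.head_cons,
    Matrix.cons_val_two, Matrix.tail_cons]
  rw [max_eq_left ha, min_eq_right ha, max_eq_right hb, min_eq_left hb,
    max_eq_right hc, min_eq_left hc]
  ring

lemma my_diag3_eq (a b c : ℝ) :
    !![a,0,0;0,b,0;0,0,c] = Matrix.diagonal ![a,b,c] := by
  ext i j
  fin_cases i <;> fin_cases j <;>
    simp [Matrix.diagonal_apply, Matrix.vecHead, Matrix.vecTail]

/-- Partial derivative in the first variable. -/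
noncomputable def d1 (u : ℝ → ℝ → ℝ → ℝ) : ℝ → ℝ → ℝ → ℝ :=
  fun x y z => deriv (fun t => u t y z) x

/-- Partial derivative in the second variable. -/
noncomputable def d2 (u : ℝ → ℝ → ℝ → ℝ) : ℝ → ℝ → ℝ → ℝ :=
  fun x y z => deriv (fun t => u x t z) y

/-- Partial derivative in the third variable. -/
noncomputable def d3 (u : ℝ → ℝ → ℝ → ℝ) : ℝ → ℝ → ℝ → ℝ :=
  fun x y z => deriv (fun t => u x y t) z

/-- The Hessian matrix of second partial derivatives of `u : ℝ³ → ℝ`. -/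
noncomputable def hess3 (u : ℝ → ℝ → ℝ → ℝ) (x y z : ℝ) : Matrix (Fin 3) (Fin 3) ℝ :=
  !![d1 (d1 u) x y z, d2 (d1 u) x y z, d3 (d1 u) x y z;
     d1 (d2 u) x y z, d2 (d2 u) x y z, d3 (d2 u) x y z;
     d1 (d3 u) x y z, d2 (d3 u) x y z, d3 (d3 u) x y z]

/-- The X-cap: `u_X(x,y,z) = −γ√ω·sin((x−α)/√ω) + γ cos y + cos z` satisfies
`−M⁺(Hess u_X) = λ·u_X` on the cap, is positive inside and vanishes on the
outer boundary. -/
theorem x_cap_eigen (lam Lam γ : ℝ) (hlam : 0 < lam) (hLam : lam ≤ Lam) (hγ : 0 < γ)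
    (ω α : ℝ) (hω : ω = Lam / lam) (hα : α = Real.pi / 2) (x y z : ℝ)
    (hy : 0 ≤ y ∧ y ≤ α) (hz : 0 ≤ z ∧ z ≤ α)
    (harg : (γ * Real.cos y + Real.cos z) / (γ * Real.sqrt ω) ≤ 1)
    (hx : α ≤ x ∧
      x ≤ α + Real.sqrt ω *
        Real.arcsin ((γ * Real.cos y + Real.cos z) / (γ * Real.sqrt ω))) :
    (-pucci lam Lam
        (hess3 (fun x y z =>
          -(γ * Real.sqrt ω) * Real.sin ((x - α) / Real.sqrt ω) +
            γ * Real.cos y + Real.cos z) x y z) =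
      lam * (-(γ * Real.sqrt ω) * Real.sin ((x - α) / Real.sqrt ω) +
        γ * Real.cos y + Real.cos z)) ∧
    (x < α + Real.sqrt ω *
        Real.arcsin ((γ * Real.cos y + Real.cos z) / (γ * Real.sqrt ω)) →
      0 < -(γ * Real.sqrt ω) * Real.sin ((x - α) / Real.sqrt ω) +
        γ * Real.cos y + Real.cos z) ∧
    (x = α + Real.sqrt ω *
        Real.arcsin ((γ * Real.cos y + Real.cos z) / (γ * Real.sqrt ω)) →
      -(γ * Real.sqrt ω) * Real.sin ((x - α) / Real.sqrt ω) +
        γ * Real.cos y + Real.cos z = 0) := by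
  obtain ⟨hy0, hy1⟩ := hy
  obtain ⟨hz0, hz1⟩ := hz
  obtain ⟨hx0, hx1⟩ := hx
  have hω0 : 0 < ω := by rw [hω]; exact div_pos (lt_of_lt_of_le hlam hLam) hlam
  set s := Real.sqrt ω with hsdef
  have hs0 : 0 < s := Real.sqrt_pos.mpr hω0
  have hs : s ≠ 0 := ne_of_gt hs0
  have hss : s * s = ω := Real.mul_self_sqrt hω0.le
  have hpi := Real.pi_pos
  have hy1' : y ≤ Real.pi / 2 := by rw [← hα]; exact hy1
  have hz1' : z ≤ Real.pi / 2 := by rw [← hα]; exact hz1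
  have hcy : 0 ≤ Real.cos y := Real.cos_nonneg_of_mem_Icc ⟨by linarith, hy1'⟩
  have hcz : 0 ≤ Real.cos z := Real.cos_nonneg_of_mem_Icc ⟨by linarith, hz1'⟩
  have hnum : 0 ≤ γ * Real.cos y + Real.cos z := by positivity
  have hγs : 0 < γ * s := mul_pos hγ hs0
  set t0 := (γ * Real.cos y + Real.cos z) / (γ * s) with ht0def
  have ht00 : 0 ≤ t0 := div_nonneg hnum hγs.le
  have hsin_arcsin : Real.sin (Real.arcsin t0) = t0 := Real.sin_arcsin (by linarith) harg
  have harc0 : 0 ≤ Real.arcsin t0 := Real.arcsin_nonneg.mpr ht00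
  have harc1 : Real.arcsin t0 ≤ Real.pi / 2 := Real.arcsin_le_pi_div_two t0
  set θ := (x - α) / s with hθdef
  have hθ0 : 0 ≤ θ := div_nonneg (by linarith) hs0.le
  have hθ1 : θ ≤ Real.arcsin t0 := by
    rw [hθdef, div_le_iff₀ hs0, mul_comm]; linarith
  have hsinθ : 0 ≤ Real.sin θ :=
    Real.sin_nonneg_of_nonneg_of_le_pi hθ0 (by linarith)
  have hst0 : (γ * s) * t0 = γ * Real.cos y + Real.cos z := by
    rw [ht0def]; field_simp
  refine ⟨?_, ?_, ?_⟩
  · -- the PDE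
    -- derivatives
    have h0 : ∀ t : ℝ, HasDerivAt (fun t' : ℝ => (t' - α) / s) (1 / s) t := by
      intro t
      simpa using ((hasDerivAt_id t).sub_const α).div_const s
    have H1 : ∀ (t Y Z : ℝ), HasDerivAt
        (fun t' => -(γ * s) * Real.sin ((t' - α) / s) + γ * Real.cos Y + Real.cos Z)
        (-(γ * s) * (Real.cos ((t - α) / s) * (1 / s))) t := by
      intro t Y Z
      have h1 := (Real.hasDerivAt_sin ((t - α) / s)).comp t (h0 t)
      exact ((h1.const_mul (-(γ * s))).add_const (γ * Real.cos Y)).add_const (Real.cos Z)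
    have H2 : ∀ (T w Z : ℝ), HasDerivAt
        (fun w' => -(γ * s) * Real.sin ((T - α) / s) + γ * Real.cos w' + Real.cos Z)
        (γ * -Real.sin w) w := by
      intro T w Z
      exact (((Real.hasDerivAt_cos w).const_mul γ).const_add _).add_const _
    have H3 : ∀ (T Y w : ℝ), HasDerivAt
        (fun w' => -(γ * s) * Real.sin ((T - α) / s) + γ * Real.cos Y + Real.cos w')
        (-Real.sin w) w := by
      intro T Y w
      exact (Real.hasDerivAt_cos w).const_add _
    set u : ℝ → ℝ → ℝ → ℝ := fun x y z =>
      -(γ * s) * Real.sin ((x - α) / s) + γ * Real.cos y + Real.cos z with hudef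
    have hd1u : ∀ T Y Z : ℝ, d1 u T Y Z = -(γ * s) * (Real.cos ((T - α) / s) * (1 / s)) := by
      intro T Y Z
      show deriv (fun t => u t Y Z) T = _
      exact (H1 T Y Z).deriv
    have hd2u : ∀ T Y Z : ℝ, d2 u T Y Z = γ * -Real.sin Y := by
      intro T Y Z
      show deriv (fun t => u T t Z) Y = _
      exact (H2 T Y Z).deriv
    have hd3u : ∀ T Y Z : ℝ, d3 u T Y Z = -Real.sin Z := by
      intro T Y Z
      show deriv (fun t => u T Y t) Z = _
      exact (H3 T Y Z).deriv
    have ha11 : d1 (d1 u) x y z = γ / s * Real.sin θ := by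
      have e : (fun t => d1 u t y z)
          = (fun t => -(γ * s) * (Real.cos ((t - α) / s) * (1 / s))) :=
        funext fun t => hd1u t y z
      show deriv (fun t => d1 u t y z) x = _
      rw [e]
      have hfin : HasDerivAt (fun t => -(γ * s) * (Real.cos ((t - α) / s) * (1 / s)))
          (-(γ * s) * ((-Real.sin ((x - α) / s) * (1 / s)) * (1 / s))) x :=
        (((Real.hasDerivAt_cos ((x - α) / s)).comp x (h0 x)).mul_const (1 / s)).const_mul
          (-(γ * s))
      rw [hfin.deriv, hθdef]
      field_simp
    have hz12 : d2 (d1 u) x y z = 0 := by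
      have e : (fun w => d1 u x w z)
          = (fun _ : ℝ => -(γ * s) * (Real.cos ((x - α) / s) * (1 / s))) :=
        funext fun w => hd1u x w z
      show deriv (fun w => d1 u x w z) y = 0
      rw [e, deriv_const]
    have hz13 : d3 (d1 u) x y z = 0 := by
      have e : (fun w => d1 u x y w)
          = (fun _ : ℝ => -(γ * s) * (Real.cos ((x - α) / s) * (1 / s))) :=
        funext fun w => hd1u x y w
      show deriv (fun w => d1 u x y w) z = 0
      rw [e, deriv_const]
    have hz21 : d1 (d2 u) x y z = 0 := by
      have e : (fun t => d2 u t y z) = (fun _ : ℝ => γ * -Real.sin y) :=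
        funext fun t => hd2u t y z
      show deriv (fun t => d2 u t y z) x = 0
      rw [e, deriv_const]
    have hb22 : d2 (d2 u) x y z = γ * -Real.cos y := by
      have e : (fun w => d2 u x w z) = (fun w : ℝ => γ * -Real.sin w) :=
        funext fun w => hd2u x w z
      show deriv (fun w => d2 u x w z) y = _
      rw [e]
      have hfin : HasDerivAt (fun w : ℝ => γ * -Real.sin w) (γ * -Real.cos y) y :=
        ((Real.hasDerivAt_sin y).neg).const_mul γ
      exact hfin.deriv
    have hz23 : d3 (d2 u) x y z = 0 := by
      have e : (fun w => d2 u x y w) = (fun _ : ℝ => γ * -Real.sin y) :=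
        funext fun w => hd2u x y w
      show deriv (fun w => d2 u x y w) z = 0
      rw [e, deriv_const]
    have hz31 : d1 (d3 u) x y z = 0 := by
      have e : (fun t => d3 u t y z) = (fun _ : ℝ => -Real.sin z) :=
        funext fun t => hd3u t y z
      show deriv (fun t => d3 u t y z) x = 0
      rw [e, deriv_const]
    have hz32 : d2 (d3 u) x y z = 0 := by
      have e : (fun w => d3 u x w z) = (fun _ : ℝ => -Real.sin z) :=
        funext fun w => hd3u x w z
      show deriv (fun w => d3 u x w z) y = 0
      rw [e, deriv_const]
    have hc33 : d3 (d3 u) x y z = -Real.cos z := by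
      have e : (fun w => d3 u x y w) = (fun w : ℝ => -Real.sin w) :=
        funext fun w => hd3u x y w
      show deriv (fun w => d3 u x y w) z = _
      rw [e]
      exact ((Real.hasDerivAt_sin z).neg).deriv
    have hH : hess3 u x y z
        = Matrix.diagonal ![γ / s * Real.sin θ, -(γ * Real.cos y), -(Real.cos z)] := by
      rw [hess3, ha11, hz12, hz13, hz21, hb22, hz23, hz31, hz32, hc33]
      rw [show γ * -Real.cos y = -(γ * Real.cos y) by ring]
      exact my_diag3_eq _ _ _
    rw [hH]
    rw [my_pucci_diag3 lam Lam _ _ _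
      (mul_nonneg (div_nonneg hγ.le hs0.le) hsinθ)
      (by nlinarith) (by linarith)]
    have hLam2 : Lam = lam * (s * s) := by
      rw [hss, hω]; field_simp
    rw [hLam2]
    field_simp
    ring
  · -- positivity inside
    intro hlt
    have hθlt : θ < Real.arcsin t0 := by
      rw [hθdef, div_lt_iff₀ hs0, mul_comm]; linarith
    have hmono := Real.strictMonoOn_sin
      (a := θ) (b := Real.arcsin t0)
      ⟨by linarith, by linarith⟩
      ⟨by linarith [Real.neg_pi_div_two_le_arcsin t0], harc1⟩ hθlt
    rw [hsin_arcsin] at hmono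
    have h2 : (γ * s) * Real.sin θ < (γ * s) * t0 :=
      mul_lt_mul_of_pos_left hmono hγs
    rw [hst0] at h2
    linarith
  · -- boundary
    intro heq
    have hθeq : θ = Real.arcsin t0 := by
      rw [hθdef, heq]
      field_simp
      ring
    rw [hθeq, hsin_arcsin]
    linarith [hst0]
end

section
/- Let 0 < λ ≤ Λ, set ω = Λ/λ and α = π/2, let γ > 0, and define u_{ZX}(x,y,z) = −γ√ω·sin s + γ·cos y − √ω·sin t, where s = (x−α)/√ω and t = (z−α)/√ω. Suppose 0 ≤ s ≤ π/2, 0 ≤ t ≤ π/2, √ω·sin s + (√ω/γ)·sin t ≤ 1, and 0 ≤ y ≤ arccos(√ω·sin s + (√ω/γ)·sin t). Then: (i) −M⁺_{λ,Λ}(Hess u_{ZX}(x,y,z)) = λ·u_{ZX}(x,y,z); (ii) u_{ZX}(x,y,z) > 0 whenever y < arccos(√ω·sin s + (√ω/γ)·sin t); and (iii) u_{ZX}(x,y,z) = 0 when y = arccos(√ω·sin s + (√ω/γ)·sin t). -/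
open Polynomial Matrix in
lemma charpoly_conj_unitary {n : Type*} [Fintype n] [DecidableEq n]
    {U : Matrix n n ℝ} (hU : U ∈ Matrix.unitaryGroup n ℝ) (A : Matrix n n ℝ) :
    (star U * A * U).charpoly = A.charpoly := by
  have h1 : star U * U = 1 := Matrix.UnitaryGroup.star_mul_self ⟨U, hU⟩
  have hd : (Matrix.diagonal fun _ : n => (X : ℝ[X])) = (X : ℝ[X]) • (1 : Matrix n n ℝ[X]) := by
    rw [Matrix.smul_one_eq_diagonal]
  have key : charmatrix (star U * A * U)
      = (star U).map C * charmatrix A * U.map C := by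
    rw [charmatrix, charmatrix, Matrix.mul_sub, Matrix.sub_mul]
    congr 1
    · rw [Matrix.scalar_apply, hd, Matrix.mul_smul, Matrix.mul_one, Matrix.smul_mul,
        ← Matrix.map_mul, h1]
      simp
    · simp [← Matrix.map_mul, Matrix.mul_assoc]
  rw [Matrix.charpoly, key, det_mul, det_mul, Matrix.charpoly, mul_right_comm,
    mul_comm, ← det_mul, ← Matrix.map_mul, h1]
  simp

open Polynomial Matrix in
lemma charpoly_diagonal_real {n : Type*} [Fintype n] [DecidableEq n] (d : n → ℝ) :
    (Matrix.diagonal d).charpoly = ∏ i, (X - C (d i)) := by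
  have h : charmatrix (Matrix.diagonal d) = Matrix.diagonal (fun i => X - C (d i)) := by
    ext i j
    by_cases h : i = j
    · subst h; simp [charmatrix_apply_eq]
    · rw [charmatrix_apply_ne _ _ _ h, Matrix.diagonal_apply_ne _ h,
        Matrix.diagonal_apply_ne _ h]
      simp
  rw [Matrix.charpoly, h, det_diagonal]

open Polynomial Matrix in
lemma eig_multiset_diag {n : Type*} [Fintype n] [DecidableEq n] (d : n → ℝ)
    (h : (Matrix.diagonal d).IsHermitian) :
    Multiset.map h.eigenvalues Finset.univ.val = Multiset.map d Finset.univ.val := by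
  have h2 : star (h.eigenvectorUnitary : Matrix n n ℝ) * Matrix.diagonal d *
      (h.eigenvectorUnitary : Matrix n n ℝ) = Matrix.diagonal (RCLike.ofReal ∘ h.eigenvalues) := by
    have h2' := h.conjStarAlgAut_star_eigenvectorUnitary
    rw [Unitary.conjStarAlgAut_star_apply] at h2'
    exact h2'
  have h3 : (RCLike.ofReal ∘ h.eigenvalues : n → ℝ) = h.eigenvalues := by
    funext i; simp
  rw [h3] at h2
  have hcp : (Matrix.diagonal d).charpoly = (Matrix.diagonal h.eigenvalues).charpoly := by
    rw [← h2, charpoly_conj_unitary (h.eigenvectorUnitary).2]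
  rw [charpoly_diagonal_real, charpoly_diagonal_real] at hcp
  have key : ∀ f : n → ℝ, (∏ i, (X - C (f i))).roots = Multiset.map f Finset.univ.val := by
    intro f
    rw [Finset.prod_eq_multiset_prod]
    rw [show (Multiset.map (fun i => X - C (f i)) Finset.univ.val)
        = Multiset.map (fun a => X - C a) (Multiset.map f Finset.univ.val) by
      rw [Multiset.map_map]; rfl]
    rw [roots_multiset_prod_X_sub_C]
  have := congrArg Polynomial.roots hcp
  rw [key, key] at this
  exact this.symm

lemma sum_g_eig {n : Type*} [Fintype n] [DecidableEq n] (d : n → ℝ)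
    (h : (Matrix.diagonal d).IsHermitian) (g : ℝ → ℝ) :
    ∑ i, g (h.eigenvalues i) = ∑ i, g (d i) := by
  have := congrArg (fun m => (Multiset.map g m).sum) (eig_multiset_diag d h)
  simp only [Multiset.map_map] at this
  rw [Finset.sum_eq_multiset_sum, Finset.sum_eq_multiset_sum]
  exact this

lemma pucci_diagonal {n : Type*} [Fintype n] [DecidableEq n] (lam Lam : ℝ) (d : n → ℝ) :
    pucci lam Lam (Matrix.diagonal d) = ∑ i, (Lam * max (d i) 0 + lam * min (d i) 0) := by
  have hA : (Matrix.diagonal d).IsHermitian := Matrix.isHermitian_diagonal d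
  rw [pucci, dif_pos hA]
  exact sum_g_eig d hA (fun e => Lam * max e 0 + lam * min e 0)

lemma hess_u (γ w α x y z : ℝ) (hw : w ≠ 0) :
    hess3 (fun x y z => -(γ * w) * Real.sin ((x - α) / w) + γ * Real.cos y -
      w * Real.sin ((z - α) / w)) x y z
    = Matrix.diagonal ![γ * Real.sin ((x - α) / w) / w, -(γ * Real.cos y),
        Real.sin ((z - α) / w) / w] := by
  set u : ℝ → ℝ → ℝ → ℝ := fun x y z => -(γ * w) * Real.sin ((x - α) / w) + γ * Real.cos y -
      w * Real.sin ((z - α) / w) with hu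
  have hlin : ∀ a : ℝ, HasDerivAt (fun t : ℝ => (t - α) / w) (1 / w) a :=
    fun a => ((hasDerivAt_id a).sub_const α).div_const w
  have hd1 : ∀ a b c : ℝ, d1 u a b c = -γ * Real.cos ((a - α) / w) := by
    intro a b c
    have h : HasDerivAt (fun t : ℝ => -(γ * w) * Real.sin ((t - α) / w) + γ * Real.cos b -
        w * Real.sin ((c - α) / w)) (-(γ * w) * (Real.cos ((a - α) / w) * (1 / w))) a :=
      ((((Real.hasDerivAt_sin _).comp a (hlin a)).const_mul (-(γ * w))).add_const _).sub_const _
    rw [d1, h.deriv]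
    field_simp
  have hd2 : ∀ a b c : ℝ, d2 u a b c = -(γ * Real.sin b) := by
    intro a b c
    have h : HasDerivAt (fun t : ℝ => -(γ * w) * Real.sin ((a - α) / w) + γ * Real.cos t -
        w * Real.sin ((c - α) / w)) (γ * -Real.sin b) b :=
      (((Real.hasDerivAt_cos b).const_mul γ).const_add _).sub_const _
    rw [d2, h.deriv]
    ring
  have hd3 : ∀ a b c : ℝ, d3 u a b c = -Real.cos ((c - α) / w) := by
    intro a b c
    have h : HasDerivAt (fun t : ℝ => -(γ * w) * Real.sin ((a - α) / w) + γ * Real.cos b -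
        w * Real.sin ((t - α) / w))
        (-(w * (Real.cos ((c - α) / w) * (1 / w)))) c :=
      (((Real.hasDerivAt_sin _).comp c (hlin c)).const_mul w).const_sub _
    rw [d3, h.deriv]
    field_simp
  have e11 : d1 (d1 u) x y z = γ * Real.sin ((x - α) / w) / w := by
    have hfun : (fun t => d1 u t y z) = fun t => -γ * Real.cos ((t - α) / w) :=
      funext fun t => hd1 t y z
    have h : HasDerivAt (fun t : ℝ => -γ * Real.cos ((t - α) / w))
        (-γ * (-Real.sin ((x - α) / w) * (1 / w))) x :=
      ((Real.hasDerivAt_cos _).comp x (hlin x)).const_mul (-γ)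
    show deriv (fun t => d1 u t y z) x = _
    rw [hfun, h.deriv]
    field_simp
  have e22 : d2 (d2 u) x y z = -(γ * Real.cos y) := by
    have hfun : (fun t => d2 u x t z) = fun t => -(γ * Real.sin t) :=
      funext fun t => hd2 x t z
    have h : HasDerivAt (fun t : ℝ => -(γ * Real.sin t)) (-(γ * Real.cos y)) y := by
      exact ((Real.hasDerivAt_sin y).const_mul γ).neg
    show deriv (fun t => d2 u x t z) y = _
    rw [hfun, h.deriv]
  have e33 : d3 (d3 u) x y z = Real.sin ((z - α) / w) / w := by
    have hfun : (fun t => d3 u x y t) = fun t => -Real.cos ((t - α) / w) :=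
      funext fun t => hd3 x y t
    have h : HasDerivAt (fun t : ℝ => -Real.cos ((t - α) / w))
        (-(-Real.sin ((z - α) / w) * (1 / w))) z := by
      exact ((Real.hasDerivAt_cos _).comp z (hlin z)).neg
    show deriv (fun t => d3 u x y t) z = _
    rw [hfun, h.deriv]
    field_simp
  have e12 : d2 (d1 u) x y z = 0 := by
    have hfun : (fun t => d1 u x t z) = fun _ => -γ * Real.cos ((x - α) / w) :=
      funext fun t => hd1 x t z
    show deriv (fun t => d1 u x t z) y = 0
    rw [hfun, deriv_const]
  have e13 : d3 (d1 u) x y z = 0 := by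
    have hfun : (fun t => d1 u x y t) = fun _ => -γ * Real.cos ((x - α) / w) :=
      funext fun t => hd1 x y t
    show deriv (fun t => d1 u x y t) z = 0
    rw [hfun, deriv_const]
  have e21 : d1 (d2 u) x y z = 0 := by
    have hfun : (fun t => d2 u t y z) = fun _ => -(γ * Real.sin y) :=
      funext fun t => hd2 t y z
    show deriv (fun t => d2 u t y z) x = 0
    rw [hfun, deriv_const]
  have e23 : d3 (d2 u) x y z = 0 := by
    have hfun : (fun t => d2 u x y t) = fun _ => -(γ * Real.sin y) :=
      funext fun t => hd2 x y t
    show deriv (fun t => d2 u x y t) z = 0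
    rw [hfun, deriv_const]
  have e31 : d1 (d3 u) x y z = 0 := by
    have hfun : (fun t => d3 u t y z) = fun _ => -Real.cos ((z - α) / w) :=
      funext fun t => hd3 t y z
    show deriv (fun t => d3 u t y z) x = 0
    rw [hfun, deriv_const]
  have e32 : d2 (d3 u) x y z = 0 := by
    have hfun : (fun t => d3 u x t z) = fun _ => -Real.cos ((z - α) / w) :=
      funext fun t => hd3 x t z
    show deriv (fun t => d3 u x t z) y = 0
    rw [hfun, deriv_const]
  rw [hess3, e11, e12, e13, e21, e22, e23, e31, e32, e33]
  ext i j
  fin_cases i <;> fin_cases j <;>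
    simp [Matrix.diagonal_apply, Matrix.vecHead, Matrix.vecTail]

/-- The ZX-bridge: `u_{ZX}(x,y,z) = −γ√ω·sin s + γ cos y − √ω·sin t`, with
`s = (x−α)/√ω`, `t = (z−α)/√ω`, satisfies `−M⁺(Hess u_{ZX}) = λ·u_{ZX}` on the
bridge, is positive inside and vanishes on the outer boundary. -/
theorem zx_bridge_eigen (lam Lam γ : ℝ) (hlam : 0 < lam) (hLam : lam ≤ Lam)
    (hγ : 0 < γ) (ω α : ℝ) (hω : ω = Lam / lam) (hα : α = Real.pi / 2)
    (x y z s t : ℝ) (hs : s = (x - α) / Real.sqrt ω) (ht : t = (z - α) / Real.sqrt ω)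
    (hs' : 0 ≤ s ∧ s ≤ Real.pi / 2) (ht' : 0 ≤ t ∧ t ≤ Real.pi / 2)
    (harg : Real.sqrt ω * Real.sin s + Real.sqrt ω / γ * Real.sin t ≤ 1)
    (hy : 0 ≤ y ∧
      y ≤ Real.arccos (Real.sqrt ω * Real.sin s + Real.sqrt ω / γ * Real.sin t)) :
    (-pucci lam Lam
        (hess3 (fun x y z =>
          -(γ * Real.sqrt ω) * Real.sin ((x - α) / Real.sqrt ω) + γ * Real.cos y -
            Real.sqrt ω * Real.sin ((z - α) / Real.sqrt ω)) x y z) =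
      lam * (-(γ * Real.sqrt ω) * Real.sin s + γ * Real.cos y -
        Real.sqrt ω * Real.sin t)) ∧
    (y < Real.arccos (Real.sqrt ω * Real.sin s + Real.sqrt ω / γ * Real.sin t) →
      0 < -(γ * Real.sqrt ω) * Real.sin s + γ * Real.cos y -
        Real.sqrt ω * Real.sin t) ∧
    (y = Real.arccos (Real.sqrt ω * Real.sin s + Real.sqrt ω / γ * Real.sin t) →
      -(γ * Real.sqrt ω) * Real.sin s + γ * Real.cos y -
        Real.sqrt ω * Real.sin t = 0) := by

  have hpi := Real.pi_pos
  set w : ℝ := Real.sqrt ω with hwdef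
  have hω0 : 0 ≤ ω := by
    rw [hω]; exact div_nonneg (by linarith) hlam.le
  have hω1 : 1 ≤ ω := by
    rw [hω]; rw [le_div_iff₀ hlam]; linarith
  have hw0 : 0 < w := Real.sqrt_pos.mpr (by linarith)
  have hw : w ≠ 0 := ne_of_gt hw0
  have hw2 : w * w = ω := Real.mul_self_sqrt hω0
  have hsins : 0 ≤ Real.sin s :=
    Real.sin_nonneg_of_nonneg_of_le_pi hs'.1 (by linarith [hs'.2])
  have hsint : 0 ≤ Real.sin t :=
    Real.sin_nonneg_of_nonneg_of_le_pi ht'.1 (by linarith [ht'.2])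
  set A : ℝ := w * Real.sin s + w / γ * Real.sin t with hAdef
  have hA0 : 0 ≤ A := by positivity
  have hA1 : A ≤ 1 := harg
  have hyle : y ≤ Real.pi / 2 :=
    hy.2.trans ((Real.arccos_le_pi_div_two).mpr hA0)
  have hcosy : 0 ≤ Real.cos y :=
    Real.cos_nonneg_of_mem_Icc ⟨by linarith [hy.1], hyle⟩
  have hγA : γ * A = γ * w * Real.sin s + w * Real.sin t := by
    rw [hAdef]; field_simp
  have hcosarc : Real.cos (Real.arccos A) = A := Real.cos_arccos (by linarith) hA1
  refine ⟨?_, ?_, ?_⟩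
  · rw [hess_u γ w α x y z hw, ← hs, ← ht, pucci_diagonal]
    rw [Fin.sum_univ_three]
    have hLam' : Lam = lam * (w * w) := by
      rw [hw2, hω]; field_simp
    have m1 : max (γ * Real.sin s / w) 0 = γ * Real.sin s / w := max_eq_left (by positivity)
    have n1 : min (γ * Real.sin s / w) 0 = 0 := min_eq_right (by positivity)
    have m2 : max (-(γ * Real.cos y)) 0 = 0 := max_eq_right (by nlinarith)
    have n2 : min (-(γ * Real.cos y)) 0 = -(γ * Real.cos y) := min_eq_left (by nlinarith)
    have m3 : max (Real.sin t / w) 0 = Real.sin t / w := max_eq_left (by positivity)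
    have n3 : min (Real.sin t / w) 0 = 0 := min_eq_right (by positivity)
    simp only [Matrix.cons_val_zero, Matrix.cons_val_one, Matrix.head_cons,
      Matrix.cons_val_two, Matrix.tail_cons]
    rw [m1, n1, m2, n2, m3, n3, hLam']
    field_simp
    ring
  · intro hlt
    have hc : A < Real.cos y := by
      rw [← hcosarc]
      exact Real.strictAntiOn_cos ⟨hy.1, by linarith⟩
        ⟨Real.arccos_nonneg A, Real.arccos_le_pi A⟩ hlt
    have h2 := mul_lt_mul_of_pos_left hc hγ
    rw [hγA] at h2
    linarith
  · intro heq
    have hc : Real.cos y = A := by rw [heq, hcosarc]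
    have h2 : γ * Real.cos y = γ * A := by rw [hc]
    rw [hγA] at h2
    linarith
end

section
/- Let 0 < λ < Λ, let a ∈ ℝ with 0 < |a| < π, let p, q, r ∈ ℝ, and suppose p·q < 0. With κ² = π²/(π²−a²) and M_a(p,q,r) the sheared 3×3 symmetric matrix (upper-left block entries (π²/(π²−a²))·p + (a²/(π²−a²))·q, −(a/√(π²−a²))·q off-diagonal, q; entry (3,3) equal to κ²·r; zeros elsewhere), one has the strict inequality M⁺_{λ,Λ}(M_a(p,q,r)) < κ² · M⁺_{λ,Λ}(diag(p,q,r)). (This strictness is what rules out equality in the shear lower bound when a ≠ 0 and ω = Λ/λ > 1.) -/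
/-- The sheared Hessian matrix `M_a(p,q,r)`. -/
noncomputable def shearedHessian (a p q r : ℝ) : Matrix (Fin 3) (Fin 3) ℝ :=
  !![Real.pi ^ 2 / (Real.pi ^ 2 - a ^ 2) * p + a ^ 2 / (Real.pi ^ 2 - a ^ 2) * q,
      -(a / Real.sqrt (Real.pi ^ 2 - a ^ 2)) * q, 0;
     -(a / Real.sqrt (Real.pi ^ 2 - a ^ 2)) * q, q, 0;
     0, 0, Real.pi ^ 2 / (Real.pi ^ 2 - a ^ 2) * r]


section AuxLemmas
open Polynomial Matrix

lemma charpoly_unitary_conj {n : Type*} [Fintype n] [DecidableEq n]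
    (U A : Matrix n n ℝ) (h1 : U * star U = 1) (h2 : star U * U = 1) :
    (U * A * star U).charpoly = A.charpoly := by
  have hcomm : ∀ B : Matrix n n ℝ[X], B * Matrix.scalar n (X : ℝ[X])
      = Matrix.scalar n (X : ℝ[X]) * B :=
    fun B => (Matrix.scalar_commute (X : ℝ[X]) (fun r => Commute.all _ _) B).symm
  have hm : charmatrix (U * A * star U)
      = (U.map C) * charmatrix A * ((star U).map C) := by
    simp only [charmatrix, mul_sub, sub_mul, RingHom.mapMatrix_apply, Matrix.map_mul]
    congr 1
    rw [mul_assoc, ← hcomm, ← mul_assoc, ← Matrix.map_mul, h1,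
      Matrix.map_one _ (map_zero C) (map_one C), one_mul]
  have hdet1 : ((star U).map C).det * (U.map C).det = 1 := by
    rw [← Matrix.det_mul, ← Matrix.map_mul, h2, Matrix.map_one _ (map_zero C) (map_one C),
      Matrix.det_one]
  calc (U * A * star U).charpoly
      = (U.map C).det * (charmatrix A).det * ((star U).map C).det := by
        rw [Matrix.charpoly, hm, Matrix.det_mul, Matrix.det_mul]
    _ = ((star U).map C).det * (U.map C).det * (charmatrix A).det := by ring
    _ = A.charpoly := by rw [hdet1, one_mul, Matrix.charpoly]

lemma charpoly_diagonal' {n : Type*} [Fintype n] [DecidableEq n] (v : n → ℝ) :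
    (Matrix.diagonal v).charpoly = ∏ i, (X - C (v i)) := by
  have : charmatrix (Matrix.diagonal v) = Matrix.diagonal (fun i => X - C (v i)) := by
    ext i j
    by_cases h : i = j
    · subst h; simp
    · simp [h, Matrix.diagonal_apply_ne _ h]
  rw [Matrix.charpoly, this, Matrix.det_diagonal]

lemma charpoly_eq_prod_eigs {n : Type*} [Fintype n] [DecidableEq n]
    {A : Matrix n n ℝ} (hA : A.IsHermitian) :
    A.charpoly = ∏ i, (X - C (hA.eigenvalues i)) := by
  obtain ⟨h2, h1⟩ := Unitary.mem_iff.mp (hA.eigenvectorUnitary).2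
  have hd : Matrix.diagonal (RCLike.ofReal ∘ hA.eigenvalues) = Matrix.diagonal hA.eigenvalues := by
    congr 1
  calc A.charpoly
      = ((hA.eigenvectorUnitary : Matrix n n ℝ) * Matrix.diagonal hA.eigenvalues *
          star (hA.eigenvectorUnitary : Matrix n n ℝ)).charpoly := by
        conv_lhs => rw [hA.spectral_theorem]
        rw [hd, Unitary.conjStarAlgAut_apply]
    _ = (Matrix.diagonal hA.eigenvalues).charpoly := charpoly_unitary_conj _ _ h1 h2
    _ = ∏ i, (X - C (hA.eigenvalues i)) := charpoly_diagonal' _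

lemma charpoly_block3 (A B D E : ℝ) :
    (!![A, B, 0; B, D, 0; 0, 0, E] : Matrix (Fin 3) (Fin 3) ℝ).charpoly
      = (X ^ 2 - C (A + D) * X + C (A * D - B * B)) * (X - C E) := by
  rw [Matrix.charpoly, Matrix.det_fin_three]
  simp only [charmatrix_apply, Matrix.diagonal_apply, Matrix.cons_val', Matrix.cons_val_zero,
    Matrix.cons_val_one, Matrix.head_cons, Matrix.empty_val', Matrix.cons_val_fin_one,
    Matrix.head_fin_const, Matrix.cons_val_two, Matrix.tail_cons, Matrix.head_fin_const,
    Matrix.of_apply]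
  norm_num [Fin.ext_iff]
  ring

lemma quad_factor (T D e₁ e₂ : ℝ) (h1 : e₁ + e₂ = T) (h2 : e₁ * e₂ = D) :
    (X ^ 2 - C T * X + C D : ℝ[X]) = (X - C e₁) * (X - C e₂) := by
  rw [← h1, ← h2, _root_.map_add, _root_.map_mul]
  ring


lemma pucci_eq_of_charpoly (lam Lam : ℝ) {A : Matrix (Fin 3) (Fin 3) ℝ} (hA : A.IsHermitian)
    (x y z : ℝ) (h : A.charpoly = (X - C x) * ((X - C y) * (X - C z))) :
    pucci lam Lam A = (Lam * max x 0 + lam * min x 0) + ((Lam * max y 0 + lam * min y 0)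
      + (Lam * max z 0 + lam * min z 0)) := by
  have hs : Finset.univ.val.map hA.eigenvalues = ({x, y, z} : Multiset ℝ) := by
    have hr1 : A.charpoly.roots = Finset.univ.val.map hA.eigenvalues := by
      rw [charpoly_eq_prod_eigs hA, Finset.prod_eq_multiset_prod]
      rw [show (Multiset.map (fun i => X - C (hA.eigenvalues i)) Finset.univ.val)
          = (Finset.univ.val.map hA.eigenvalues).map (fun a => X - C a) by
        rw [Multiset.map_map]; rfl]
      rw [roots_multiset_prod_X_sub_C]
    have hr2 : A.charpoly.roots = ({x, y, z} : Multiset ℝ) := by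
      have hprod : (({x, y, z} : Multiset ℝ).map (fun a => X - C a)).prod
          = (X - C x) * ((X - C y) * (X - C z)) := by
        simp [Multiset.insert_eq_cons]
      rw [h, ← hprod, roots_multiset_prod_X_sub_C]
    rw [← hr1, hr2]
  rw [pucci, dif_pos hA]
  have hsum : ∑ i, (Lam * max (hA.eigenvalues i) 0 + lam * min (hA.eigenvalues i) 0)
      = ((Finset.univ.val.map hA.eigenvalues).map
          (fun e => Lam * max e 0 + lam * min e 0)).sum := by
    rw [Multiset.map_map]; rfl
  rw [hsum, hs]
  simp [Multiset.insert_eq_cons, add_assoc]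

set_option maxHeartbeats 1000000 in
/-- Strict inequality for the sheared Pucci operator when `λ < Λ`, `a ≠ 0` and
`p·q < 0`: `M⁺_{λ,Λ}(M_a(p,q,r)) < κ²·M⁺_{λ,Λ}(diag(p,q,r))`. -/
theorem pucci_sheared_lt_of_pq_neg (lam Lam a p q r : ℝ) (hlam : 0 < lam)
    (hLam : lam < Lam) (ha : 0 < |a|) (ha' : |a| < Real.pi) (hpq : p * q < 0) :
    pucci lam Lam (shearedHessian a p q r) <
      Real.pi ^ 2 / (Real.pi ^ 2 - a ^ 2) *
        pucci lam Lam (Matrix.diagonal ![p, q, r]) := by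
  have hπ : 0 < Real.pi := Real.pi_pos
  have ha2 : 0 < a ^ 2 := by rw [← sq_abs]; exact pow_pos ha 2
  have haπ : a ^ 2 < Real.pi ^ 2 := by
    rw [← sq_abs]; exact pow_lt_pow_left₀ ha' (abs_nonneg a) (by norm_num)
  have hw : 0 < Real.pi ^ 2 - a ^ 2 := by linarith
  obtain ⟨k, hk⟩ : ∃ k, Real.pi ^ 2 / (Real.pi ^ 2 - a ^ 2) = k := ⟨_, rfl⟩
  rw [hk]
  have hk1 : 1 < k := by
    rw [← hk, one_lt_div hw]; linarith
  have hk0 : 0 < k := by linarith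
  have hc : a ^ 2 / (Real.pi ^ 2 - a ^ 2) = k - 1 := by
    rw [← hk]; field_simp; ring
  have hsq : Real.sqrt (Real.pi ^ 2 - a ^ 2) * Real.sqrt (Real.pi ^ 2 - a ^ 2)
      = Real.pi ^ 2 - a ^ 2 := Real.mul_self_sqrt hw.le
  -- discriminant and eigenvalues of the 2x2 block
  have hdisc0 : (0:ℝ) ≤ (k * (p + q)) ^ 2 - 4 * (k * (p * q)) := by
    nlinarith [sq_nonneg (k * (p + q))]
  obtain ⟨s, hsdef⟩ : ∃ s, Real.sqrt ((k * (p + q)) ^ 2 - 4 * (k * (p * q))) = s := ⟨_, rfl⟩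
  have hs0 : 0 ≤ s := hsdef ▸ Real.sqrt_nonneg _
  have hs2 : s ^ 2 = (k * (p + q)) ^ 2 - 4 * (k * (p * q)) := by
    rw [← hsdef]; exact Real.sq_sqrt hdisc0
  have hsT : |k * (p + q)| < s := by
    refine lt_of_pow_lt_pow_left₀ 2 hs0 ?_
    rw [sq_abs]; nlinarith
  have hx : 0 < (k * (p + q) + s) / 2 := by
    have := neg_abs_le (k * (p + q)); linarith
  have hy : (k * (p + q) - s) / 2 < 0 := by
    have := le_abs_self (k * (p + q)); linarith
  -- Hermitian-ness
  have hH : (shearedHessian a p q r).IsHermitian := by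
    show (shearedHessian a p q r)ᴴ = shearedHessian a p q r
    ext i j
    fin_cases i <;> fin_cases j <;>
      simp [shearedHessian, Matrix.conjTranspose_apply]
  have hHd : (Matrix.diagonal ![p, q, r]).IsHermitian := Matrix.isHermitian_diagonal _
  -- characteristic polynomials
  have hTq : (Real.pi ^ 2 / (Real.pi ^ 2 - a ^ 2) * p + a ^ 2 / (Real.pi ^ 2 - a ^ 2) * q) + q
      = k * (p + q) := by rw [hc, hk]; ring
  have hBB : (-(a / Real.sqrt (Real.pi ^ 2 - a ^ 2)) * q)
        * (-(a / Real.sqrt (Real.pi ^ 2 - a ^ 2)) * q)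
      = a ^ 2 / (Real.pi ^ 2 - a ^ 2) * (q * q) := by
    have h' : (-(a / Real.sqrt (Real.pi ^ 2 - a ^ 2)) * q)
          * (-(a / Real.sqrt (Real.pi ^ 2 - a ^ 2)) * q)
        = (a * a) / (Real.sqrt (Real.pi ^ 2 - a ^ 2) * Real.sqrt (Real.pi ^ 2 - a ^ 2))
          * (q * q) := by ring
    rw [h', hsq]; ring
  have hDq : (Real.pi ^ 2 / (Real.pi ^ 2 - a ^ 2) * p + a ^ 2 / (Real.pi ^ 2 - a ^ 2) * q) * q
        - (-(a / Real.sqrt (Real.pi ^ 2 - a ^ 2)) * q)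
          * (-(a / Real.sqrt (Real.pi ^ 2 - a ^ 2)) * q)
      = k * (p * q) := by
    rw [hBB, hc, hk]; ring
  have hsum : (k * (p + q) + s) / 2 + (k * (p + q) - s) / 2 = k * (p + q) := by ring
  have hprod : ((k * (p + q) + s) / 2) * ((k * (p + q) - s) / 2) = k * (p * q) := by
    have h' : ((k * (p + q) + s) / 2) * ((k * (p + q) - s) / 2)
        = ((k * (p + q)) ^ 2 - s ^ 2) / 4 := by ring
    rw [h', hs2]; ring
  have hchs : (shearedHessian a p q r).charpoly
      = (Polynomial.X - Polynomial.C ((k * (p + q) + s) / 2))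
        * ((Polynomial.X - Polynomial.C ((k * (p + q) - s) / 2))
          * (Polynomial.X - Polynomial.C (k * r))) := by
    have h0 := charpoly_block3
      (Real.pi ^ 2 / (Real.pi ^ 2 - a ^ 2) * p + a ^ 2 / (Real.pi ^ 2 - a ^ 2) * q)
      (-(a / Real.sqrt (Real.pi ^ 2 - a ^ 2)) * q) q (Real.pi ^ 2 / (Real.pi ^ 2 - a ^ 2) * r)
    rw [hTq, hDq, quad_factor _ _ _ _ hsum hprod, mul_assoc] at h0
    rw [show k * r = Real.pi ^ 2 / (Real.pi ^ 2 - a ^ 2) * r by rw [hk]]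
    exact h0
  have hchd : (Matrix.diagonal ![p, q, r]).charpoly
      = (Polynomial.X - Polynomial.C p) * ((Polynomial.X - Polynomial.C q)
        * (Polynomial.X - Polynomial.C r)) := by
    rw [charpoly_diagonal', Fin.prod_univ_three]
    simp [mul_assoc]
  rw [pucci_eq_of_charpoly lam Lam hH _ _ _ hchs,
    pucci_eq_of_charpoly lam Lam hHd _ _ _ hchd]
  -- simplify the max/min of the block eigenvalues and of k*r
  rw [max_eq_left hx.le, min_eq_right hx.le, max_eq_right hy.le, min_eq_left hy.le]
  have hmaxr : max (k * r) 0 = k * max r 0 := by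
    rcases le_total r 0 with h | h
    · rw [max_eq_right h, max_eq_right (mul_nonpos_of_nonneg_of_nonpos hk0.le h), mul_zero]
    · rw [max_eq_left h, max_eq_left (mul_nonneg hk0.le h)]
  have hminr : min (k * r) 0 = k * min r 0 := by
    rcases le_total r 0 with h | h
    · rw [min_eq_left h, min_eq_left (mul_nonpos_of_nonneg_of_nonpos hk0.le h)]
    · rw [min_eq_right h, min_eq_right (mul_nonneg hk0.le h), mul_zero]
  rw [hmaxr, hminr]
  -- the key strict inequality on s
  rcases mul_neg_iff.mp hpq with ⟨hp, hq⟩ | ⟨hp, hq⟩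
  · -- p > 0 > q
    have hkey : s < k * (p - q) := by
      refine lt_of_pow_lt_pow_left₀ 2 (by nlinarith) ?_
      rw [hs2]; nlinarith [mul_pos (mul_pos hk0 (sub_pos.mpr hk1)) (mul_pos hp (neg_pos.mpr hq))]
    rw [max_eq_left hp.le, min_eq_right hp.le, max_eq_right hq.le, min_eq_left hq.le]
    nlinarith [mul_pos (sub_pos.mpr hLam) (sub_pos.mpr hkey)]
  · -- p < 0 < q
    have hkey : s < k * (q - p) := by
      refine lt_of_pow_lt_pow_left₀ 2 (by nlinarith) ?_
      rw [hs2]; nlinarith [mul_pos (mul_pos hk0 (sub_pos.mpr hk1)) (mul_pos hq (neg_pos.mpr hp))]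
    rw [max_eq_right hp.le, min_eq_left hp.le, max_eq_left hq.le, min_eq_right hq.le]
    nlinarith [mul_pos (sub_pos.mpr hLam) (sub_pos.mpr hkey)]

end AuxLemmas
end
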